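/- Let G be an ordered graph on [n] and let a, b ∈ [n] with a < b. If G − a = G − b, then the interval [a,b] = {w : a ≤ w ≤ b} is a semi-homogeneous block in G. -/

import Mathlib

namespace OrderedGraphs

/-- The order-preserving map `Fin (n-1) → Fin n` that skips the vertex `v`. -/
def delMap {n : ℕ} (v : Fin n) (i : Fin (n - 1)) : Fin n :=
  if h : (i : ℕ) < (v : ℕ) then ⟨i, lt_trans h v.isLt⟩
  else ⟨(i : ℕ) + 1, by have h1 := i.isLt; have h2 := v.isLt; omega⟩

/-- `erase G v` is the ordered graph `G − v` on `[n-1]`, obtained by deleting `v` and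
relabelling the remaining vertices order-preservingly. -/
def erase {n : ℕ} (G : SimpleGraph (Fin n)) (v : Fin n) : SimpleGraph (Fin (n - 1)) where
  Adj i j := G.Adj (delMap v i) (delMap v j)
  symm := ⟨by intro i j h; exact G.adj_symm h⟩
  loopless := ⟨by intro i h; exact G.irrefl h⟩

/-- The shadow `∂G` of a single ordered graph. -/
def shadow {n : ℕ} (G : SimpleGraph (Fin n)) : Set (SimpleGraph (Fin (n - 1))) :=
  {H | ∃ v : Fin n, H = erase G v}

/-- The shadow `∂𝒢` of a collection of ordered graphs. -/
def shadowCol {n : ℕ} (𝒢 : Set (SimpleGraph (Fin n))) : Set (SimpleGraph (Fin (n - 1))) :=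
  ⋃ G ∈ 𝒢, shadow G

/-- `x ∼ y` : the relation `Γ(x) \ {y} = Γ(y) \ {x}`. -/
def simRel {n : ℕ} (G : SimpleGraph (Fin n)) (x y : Fin n) : Prop :=
  G.neighborSet x \ {y} = G.neighborSet y \ {x}

/-- A set of consecutive vertices whose elements are pairwise `∼`-equivalent. -/
def IsHomInterval {n : ℕ} (G : SimpleGraph (Fin n)) (B : Set (Fin n)) : Prop :=
  B.OrdConnected ∧ ∀ x ∈ B, ∀ y ∈ B, simRel G x y

/-- A homogeneous block: a maximal nonempty set of consecutive vertices whose elements are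
pairwise `∼`-equivalent. -/
def IsHomBlock {n : ℕ} (G : SimpleGraph (Fin n)) (B : Set (Fin n)) : Prop :=
  B.Nonempty ∧ IsHomInterval G B ∧ ∀ C, IsHomInterval G C → B ⊆ C → B = C

open Classical in
/-- The excess `m(G) = Σ_{B : |B| ≥ 3} (|B| − 2)`, the sum over homogeneous blocks;
(truncated ℕ-subtraction makes blocks with `|B| ≤ 2` contribute `0`). -/
noncomputable def excess {n : ℕ} (G : SimpleGraph (Fin n)) : ℕ :=
  ∑ B ∈ Finset.univ.filter (fun B : Finset (Fin n) => IsHomBlock G ↑B), (B.card - 2)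

/-- Two ordered graphs have the same type. -/
def SameType {n n' : ℕ} (G : SimpleGraph (Fin n)) (G' : SimpleGraph (Fin n')) : Prop :=
  ∃ (k : ℕ) (B : Fin k → Set (Fin n)) (B' : Fin k → Set (Fin n')),
    (∀ i, IsHomBlock G (B i)) ∧ (∀ C, IsHomBlock G C → ∃ i, C = B i) ∧
    (∀ i j : Fin k, i < j → ∀ x ∈ B i, ∀ y ∈ B j, x < y) ∧
    (∀ i, IsHomBlock G' (B' i)) ∧ (∀ C, IsHomBlock G' C → ∃ i, C = B' i) ∧
    (∀ i j : Fin k, i < j → ∀ x ∈ B' i, ∀ y ∈ B' j, x < y) ∧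
    (∀ i j : Fin k, (∀ u ∈ B i, ∀ v ∈ B j, u ≠ v → G.Adj u v) ↔
            (∀ u ∈ B' i, ∀ v ∈ B' j, u ≠ v → G'.Adj u v)) ∧
    (∀ i, (B i).ncard = 1 ↔ (B' i).ncard = 1)

/-- The shadow within types `∂_τ G`. -/
def typeShadow {n : ℕ} (G : SimpleGraph (Fin n)) : Set (SimpleGraph (Fin (n - 1))) :=
  {H ∈ shadow G | SameType H G}

/-- The shadow within types `∂_τ 𝒢` of a collection. -/
def typeShadowCol {n : ℕ} (𝒢 : Set (SimpleGraph (Fin n))) : Set (SimpleGraph (Fin (n - 1))) :=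
  ⋃ G ∈ 𝒢, typeShadow G

/-- `Z^d(n) = {x ∈ ℤ^d : x_i ≥ 0, Σ_i x_i = n}`. -/
def Zdn (d n : ℕ) : Set (Fin d → ℤ) := {x | (∀ i, 0 ≤ x i) ∧ ∑ i, x i = (n : ℤ)}

/-- A line in `Z^d(n)`, determined by two coordinates `j, k`. -/
def ZLine (d n : ℕ) (j k : Fin d) : Set (Fin d → ℤ) :=
  {x ∈ Zdn d n | ∀ i, i ≠ j → i ≠ k → x i = 0}

/-- The shadow of a subset `A ⊆ Z^d(n)`. -/
def Zshadow (d n : ℕ) (A : Set (Fin d → ℤ)) : Set (Fin d → ℤ) :=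
  {x ∈ Zdn d (n - 1) | ∃ y ∈ A, ∀ i, x i ≤ y i}

/-- `phiAt G d x` : `x ∈ ℤ^d` is the image `φ(G)` of `G`, i.e. the homogeneous blocks of `G`
of size at least `2`, in increasing order, are `B_1 < ⋯ < B_d` and `x i = |B_i| − 2`. -/
def phiAt {n : ℕ} (G : SimpleGraph (Fin n)) (d : ℕ) (x : Fin d → ℤ) : Prop :=
  ∃ B : Fin d → Set (Fin n),
    (∀ i, IsHomBlock G (B i) ∧ 2 ≤ (B i).ncard) ∧
    (∀ C, IsHomBlock G C → 2 ≤ C.ncard → ∃ i, C = B i) ∧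
    (∀ i j : Fin d, i < j → ∀ u ∈ B i, ∀ v ∈ B j, u < v) ∧
    (∀ i, x i = ((B i).ncard : ℤ) - 2)

/-- `𝒢₀` (a set of ordered graphs of a common type, of common excess `m`) contains a line:
some subset `S ⊆ 𝒢₀` has `φ(S)` equal to a line in `Z^d(m)`. -/
def ContainsLine {n : ℕ} (𝒢₀ : Set (SimpleGraph (Fin n))) (m : ℕ) : Prop :=
  ∃ S ⊆ 𝒢₀, ∃ (d : ℕ) (j k : Fin d),
    {x : Fin d → ℤ | ∃ G ∈ S, phiAt G d x} = ZLine d m j k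

/-- `eraseSet G X` is `G − X`: delete all vertices of `X` and relabel order-preservingly. -/
noncomputable def eraseSet {n : ℕ} (G : SimpleGraph (Fin n)) (X : Finset (Fin n)) :
    SimpleGraph (Fin (n - X.card)) where
  Adj i j := G.Adj ((Xᶜ.orderIsoOfFin (by rw [Finset.card_compl, Fintype.card_fin]) i) : Fin n)
                   ((Xᶜ.orderIsoOfFin (by rw [Finset.card_compl, Fintype.card_fin]) j) : Fin n)
  symm := ⟨by intro i j h; exact G.adj_symm h⟩
  loopless := ⟨by intro i h; exact G.irrefl h⟩

/-- A semi-homogeneous block: a set `B` of consecutive vertices such that all vertices of `B`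
have the same neighbourhood outside `B`, and, for some `L ⊆ ℕ`, two vertices `x, y ∈ B` are
adjacent iff `|x − y| ∈ L`. -/
def IsSemiHomBlock {n : ℕ} (G : SimpleGraph (Fin n)) (B : Set (Fin n)) : Prop :=
  B.OrdConnected ∧
  (∀ x ∈ B, ∀ y ∈ B, G.neighborSet x \ B = G.neighborSet y \ B) ∧
  ∃ L : Set ℕ, ∀ x ∈ B, ∀ y ∈ B, (G.Adj x y ↔ ((x : ℤ) - (y : ℤ)).natAbs ∈ L)

/-!
Read `G − a` and `G − b` on the original labels of `G`: vertex `i` of the common graph is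
`x = delMap a i` in the first reading and `collapse a b x` in the second, where `collapse a b`
moves `(a, b]` one step down. Hence adjacency among vertices other than `a` is invariant under
`collapse a b`. Walking a vertex of `[a, b]` down to `a` one step at a time shows that it has the
same neighbours as `a` outside `[a, b]`; walking a pair inside `[a, b]` down until its lower end is
`a` shows that their adjacency depends only on their distance. To keep the shifts in plain `ℕ`
arithmetic, `G` is transported to `ℕ` along `Fin.valEmbedding`, where the vertices `≥ n` are
isolated and fixed by `collapse a b`.
-/

def collapse (a b x : ℕ) : ℕ :=
  if a < x ∧ x ≤ b then x - 1 else x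

def CollapseInvariant (H : SimpleGraph ℕ) (a b : ℕ) : Prop :=
  ∀ x y, x ≠ a → y ≠ a → (H.Adj x y ↔ H.Adj (collapse a b x) (collapse a b y))

namespace CollapseInvariant

variable {H : SimpleGraph ℕ} {a b : ℕ}

theorem adj_iff_adj_left (hH : CollapseInvariant H a b) {x z : ℕ} (hax : a ≤ x) (hxb : x ≤ b)
    (hz : z < a ∨ b < z) : H.Adj x z ↔ H.Adj a z := by
  induction x, hax using Nat.le_induction with
  | base => rfl
  | succ x hax ih =>
    have hx : collapse a b (x + 1) = x := by unfold collapse; split_ifs <;> omega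
    have hz' : collapse a b z = z := by unfold collapse; split_ifs <;> omega
    rw [hH (x + 1) z (by omega) (by omega), hx, hz', ih (by omega)]

theorem adj_iff_adj_add_sub (hH : CollapseInvariant H a b) {x y : ℕ} (hax : a ≤ x)
    (hxy : x ≤ y) (hyb : y ≤ b) : H.Adj x y ↔ H.Adj a (a + (y - x)) := by
  induction x, hax using Nat.le_induction generalizing y with
  | base => rw [Nat.add_sub_cancel' hxy]
  | succ x hax ih =>
    have hx : collapse a b (x + 1) = x := by unfold collapse; split_ifs <;> omega
    have hy : collapse a b y = y - 1 := by unfold collapse; split_ifs <;> omega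
    rw [hH (x + 1) y (by omega) (by omega), hx, hy, ih (by omega) (by omega),
      show y - 1 - x = y - (x + 1) by omega]

theorem adj_iff_adj_add_dist (hH : CollapseInvariant H a b) {x y : ℕ} (hx : x ∈ Set.Icc a b)
    (hy : y ∈ Set.Icc a b) : H.Adj x y ↔ H.Adj a (a + Nat.dist x y) := by
  wlog hxy : x ≤ y generalizing x y
  · rw [H.adj_comm, Nat.dist_comm]
    exact this hy hx (by omega)
  rw [Nat.dist_eq_sub_of_le hxy]
  exact hH.adj_iff_adj_add_sub hx.1 hxy hy.2

end CollapseInvariant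

theorem val_delMap {n : ℕ} (v : Fin n) (i : Fin (n - 1)) :
    (delMap v i : ℕ) = if (i : ℕ) < v then (i : ℕ) else i + 1 := by
  unfold delMap
  split_ifs <;> rfl

theorem val_delMap_eq_collapse {n : ℕ} {a b : Fin n} (hab : a < b) (i : Fin (n - 1)) :
    (delMap b i : ℕ) = collapse a b (delMap a i) := by
  rw [val_delMap, val_delMap]
  unfold collapse
  split_ifs <;> omega

theorem exists_delMap_eq {n : ℕ} {v x : Fin n} (hx : x ≠ v) : ∃ i, delMap v i = x := by
  have hx' : (x : ℕ) ≠ v := Fin.val_ne_of_ne hx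
  refine ⟨⟨if (x : ℕ) < v then x else x - 1, by split_ifs <;> omega⟩, Fin.ext ?_⟩
  rw [val_delMap]
  dsimp only
  split_ifs <;> omega

theorem collapseInvariant_of_erase_eq {n : ℕ} {G : SimpleGraph (Fin n)} {a b : Fin n}
    (hab : a < b) (h : erase G a = erase G b) :
    CollapseInvariant (G.map Fin.valEmbedding) a b := by
  have hfin (u v : Fin n) (hu : u ≠ a) (hv : v ≠ a) :
      G.Adj u v ↔ (G.map Fin.valEmbedding).Adj (collapse a b u) (collapse a b v) := by
    obtain ⟨i, rfl⟩ := exists_delMap_eq hu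
    obtain ⟨j, rfl⟩ := exists_delMap_eq hv
    rw [← val_delMap_eq_collapse hab, ← val_delMap_eq_collapse hab]
    change (erase G a).Adj i j ↔ _
    rw [h]
    exact (SimpleGraph.map_adj_apply (G := G) (f := Fin.valEmbedding)).symm
  have hlt {x y : ℕ} (hxy : (G.map Fin.valEmbedding).Adj x y) : x < n ∧ y < n := by
    obtain ⟨u, v, -, rfl, rfl⟩ := (SimpleGraph.map_adj _ _ _ _).mp hxy
    exact ⟨u.isLt, v.isLt⟩
  intro x y hx hy
  by_cases hxy : x < n ∧ y < n
  · obtain ⟨u, rfl⟩ : ∃ u : Fin n, (u : ℕ) = x := ⟨⟨x, hxy.1⟩, rfl⟩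
    obtain ⟨v, rfl⟩ : ∃ v : Fin n, (v : ℕ) = y := ⟨⟨y, hxy.2⟩, rfl⟩
    exact SimpleGraph.map_adj_apply.trans (hfin u v (Fin.ne_of_val_ne hx) (Fin.ne_of_val_ne hy))
  · have hc : ¬(collapse a b x < n ∧ collapse a b y < n) := by
      unfold collapse
      split_ifs <;> omega
    exact iff_of_false (fun hadj => hxy (hlt hadj)) (fun hadj => hc (hlt hadj))

theorem neighborSet_diff_Icc_eq {n : ℕ} {G : SimpleGraph (Fin n)} {a b : Fin n}
    (hG : CollapseInvariant (G.map Fin.valEmbedding) a b) {x : Fin n} (hx : x ∈ Set.Icc a b) :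
    G.neighborSet x \ Set.Icc a b = G.neighborSet a \ Set.Icc a b := by
  ext z
  simp only [Set.mem_sdiff, SimpleGraph.mem_neighborSet]
  refine and_congr_left fun hz => ?_
  have hz' : (z : ℕ) < a ∨ (b : ℕ) < z := by
    simp only [Set.mem_Icc] at hz
    omega
  rw [← SimpleGraph.map_adj_apply (f := Fin.valEmbedding),
    ← SimpleGraph.map_adj_apply (f := Fin.valEmbedding) (a := a)]
  exact hG.adj_iff_adj_left hx.1 hx.2 hz'

/-- **Lemma (semi-homogeneous blocks).** If `a < b` and `G − a = G − b`, then the interval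
`[a, b]` is a semi-homogeneous block in `G`. -/
theorem semi_hom_block (n : ℕ) (G : SimpleGraph (Fin n)) (a b : Fin n) (hab : a < b)
    (h : erase G a = erase G b) :
    IsSemiHomBlock G (Set.Icc a b) := by
  have hG := collapseInvariant_of_erase_eq hab h
  refine ⟨Set.ordConnected_Icc, fun x hx y hy => ?_, {d | (G.map Fin.valEmbedding).Adj a (a + d)},
    fun x hx y hy => ?_⟩
  · rw [neighborSet_diff_Icc_eq hG hx, neighborSet_diff_Icc_eq hG hy]
  · have hdist : ((x : ℤ) - y).natAbs = Nat.dist x y := by unfold Nat.dist; omega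
    rw [← SimpleGraph.map_adj_apply (f := Fin.valEmbedding), hdist]
    exact hG.adj_iff_adj_add_dist hx hy

end OrderedGraphs
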